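/- arXiv:1204.1624 — 2 statements merged into one kernel-verified Lean document; each statement's English description precedes it below -/
import Mathlib

section
/- (Upper bound on the probability of type-1 anomalies for MUCB.) Let K ≥ 2 and run MUCB(α) on K arms with exponentially distributed rewards. For each suboptimal arm k ≠ k* set u_k(t) = ⌈ 4α ln(t) / (1 − ρ_k)² ⌉. Then for every suboptimal arm k and every t ≥ 2, the probability of the type-1 anomaly satisfies P( {φ₁(u_k(t))}_{k,t} ) ≤ t^{−α/2 + 1}. -/
/-!
On the anomaly the arm has been pulled some `s ∈ [u, t]` times and, its index being finite, the
sum of its first `s` rewards is at least `s μ* (1 - δ)` with `δ = √(α ln t / s)`. For fixed `s`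
this is an upper deviation of a sum of `s` i.i.d. `Exp(λ_k)` variables, which the Chernoff bound
controls by `exp (-s (x - 1 - log x))` at `x = λ_k μ* (1 - δ) = (1 - δ) / ρ_k`. Since
`log x ≤ sinh (log x) = (x - x⁻¹) / 2`, the rate is at least `(x - 1)² / (2x)`, and the choice of
`u` gives `δ ≤ (1 - ρ_k) / 2`, whence the rate is at least `δ² / 2` and the probability at most
`exp (-α ln t / 2) = t^(-α/2)`. A union bound over the at most `t` values of `s` gives
`t^(1 - α/2)`; for `α ≤ 2` the bound is at least one.
-/

open MeasureTheory ProbabilityTheory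

/-- `pullCount I k t ω` is `T_{k,t}`, the number of rounds `m < t` at which arm `k` was pulled. -/
def pullCount {Ω : Type*} {K : ℕ} (I : ℕ → Ω → Fin K) (k : Fin K) (t : ℕ) (ω : Ω) : ℕ :=
  ((Finset.range t).filter fun m => I m ω = k).card

/-- `reward X I m ω` is the reward `r_m` received at round `m`: the next unseen sample of the
pulled arm `I_m` (here `X k n` is the reward of the `(n+1)`-st pull of arm `k`, `n = 0, 1, …`). -/
def reward {Ω : Type*} {K : ℕ} (X : Fin K → ℕ → Ω → ℝ) (I : ℕ → Ω → Fin K)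
    (m : ℕ) (ω : Ω) : ℝ :=
  X (I m ω) (pullCount I (I m ω) m ω) ω

/-- `sampleMean X I k t ω` is `X̄_{k,t}`, the empirical mean of the rewards obtained from arm `k`
during the first `t` rounds (junk value `0` if the arm was never pulled). -/
noncomputable def sampleMean {Ω : Type*} {K : ℕ} (X : Fin K → ℕ → Ω → ℝ) (I : ℕ → Ω → Fin K)
    (k : Fin K) (t : ℕ) (ω : Ω) : ℝ :=
  (∑ n ∈ Finset.range (pullCount I k t ω), X k n ω) / (pullCount I k t ω)

/-- The MUCB(α) index `B_{k,t} = X̄_{k,t} · M_{k,t}(T_{k,t})` with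
`M_{k,t}(u) = 1 / max {0, 1 − √(α ln t / u)}` and the convention `1/0 = +∞`: the index is `⊤`
exactly when `T_{k,t} ≤ α ln t` (in particular when `T_{k,t} = 0`), and otherwise equals the
real number `X̄_{k,t} · (1 − √(α ln t / T_{k,t}))⁻¹`. -/
noncomputable def mucbIndex {Ω : Type*} {K : ℕ} (α : ℝ) (X : Fin K → ℕ → Ω → ℝ)
    (I : ℕ → Ω → Fin K) (k : Fin K) (t : ℕ) (ω : Ω) : EReal :=
  if pullCount I k t ω = 0 ∨ (pullCount I k t ω : ℝ) ≤ α * Real.log t then ⊤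
  else ((sampleMean X I k t ω *
      (1 - Real.sqrt (α * Real.log t / (pullCount I k t ω)))⁻¹ : ℝ) : EReal)

/-- A policy `I` is deterministic if the arm chosen at each round `t` is a function of the
history `(I_0, r_0, …, I_{t−1}, r_{t−1})` of past arms and rewards. -/
def IsDeterministicPolicy {Ω : Type*} {K : ℕ} (X : Fin K → ℕ → Ω → ℝ)
    (I : ℕ → Ω → Fin K) : Prop :=
  ∃ pol : (t : ℕ) → (Fin t → Fin K × ℝ) → Fin K,
    ∀ t ω, I t ω = pol t fun m => (I m.1 ω, reward X I m.1 ω)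

/-- The policy `I` is a MUCB(α) policy: at every round it selects an arm of maximal index. -/
def IsMUCBPolicy {Ω : Type*} {K : ℕ} (α : ℝ) (X : Fin K → ℕ → Ω → ℝ)
    (I : ℕ → Ω → Fin K) : Prop :=
  ∀ t ω k, mucbIndex α X I k t ω ≤ mucbIndex α X I (I t ω) t ω

open Real Set
open scoped Finset

lemma Real.sq_sub_one_div_two_mul_le_sub_one_sub_log {x : ℝ} (hx : 1 ≤ x) :
    (x - 1) ^ 2 / (2 * x) ≤ x - 1 - log x := by
  have hx0 : 0 < x := zero_lt_one.trans_le hx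
  have hlog : log x ≤ (x - x⁻¹) / 2 := sinh_log hx0 ▸ self_le_sinh_iff.2 (log_nonneg hx)
  have hsplit : (x - 1) ^ 2 / (2 * x) = x - 1 - (x - x⁻¹) / 2 := by
    field_simp
    ring
  linarith

lemma Real.sq_div_two_le_sub_one_sub_log_div {ρ δ : ℝ} (hρ : 0 < ρ) (hδ0 : 0 ≤ δ)
    (hδ : δ ≤ (1 - ρ) / 2) :
    δ ^ 2 / 2 ≤ (1 - δ) / ρ - 1 - log ((1 - δ) / ρ) := by
  have hx : 1 ≤ (1 - δ) / ρ := by rw [le_div_iff₀ hρ]; linarith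
  refine le_trans ?_ (sq_sub_one_div_two_mul_le_sub_one_sub_log hx)
  have hρδ : ρ * (1 - δ) ≤ 1 := by nlinarith
  rw [div_le_div_iff₀ two_pos (by positivity)]
  field_simp
  calc δ ^ 2 * (1 - δ) * ρ = δ ^ 2 * (ρ * (1 - δ)) := by ring
    _ ≤ δ ^ 2 := mul_le_of_le_one_right (sq_nonneg δ) hρδ
    _ ≤ (1 - δ - ρ) ^ 2 := pow_le_pow_left₀ hδ0 (by linarith) 2

lemma Real.sqrt_div_le_half_of_ceil_le {a c : ℝ} {s : ℕ} (hc : 0 < c)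
    (hs : ⌈4 * a / c ^ 2⌉₊ ≤ s) : √(a / s) ≤ c / 2 := by
  rcases s.eq_zero_or_pos with rfl | hs0
  · simp only [CharP.cast_eq_zero, div_zero, sqrt_zero]
    positivity
  have hceil : 4 * a / c ^ 2 ≤ s := (Nat.le_ceil _).trans (by exact_mod_cast hs)
  have hle : a / s ≤ (c / 2) ^ 2 := by
    rw [div_le_iff₀ (by positivity)] at hceil ⊢
    linarith
  calc √(a / s) ≤ √((c / 2) ^ 2) := sqrt_le_sqrt hle
    _ = c / 2 := sqrt_sq (by positivity)

lemma lt_ceil_four_mul_div_sq {a ρ : ℝ} (ha : 0 < a) (hρ0 : 0 ≤ ρ) (hρ1 : ρ < 1) :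
    a < ⌈4 * a / (1 - ρ) ^ 2⌉₊ := calc
  a < 4 * a := by linarith
  _ ≤ 4 * a / (1 - ρ) ^ 2 := le_div_self (by positivity) (by nlinarith) (by nlinarith)
  _ ≤ ⌈4 * a / (1 - ρ) ^ 2⌉₊ := Nat.le_ceil _

namespace ProbabilityTheory

variable {Ω ι : Type*} [MeasurableSpace Ω] {P : Measure Ω}

lemma exponentialPDF_toReal_smul_exp_mul {r : ℝ} (hr : 0 < r) (θ x : ℝ) :
    (exponentialPDF r x).toReal • exp (θ * x) =
      (Ici 0).indicator (fun x => r * exp ((θ - r) * x)) x := by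
  rw [exponentialPDF, ENNReal.toReal_ofReal (exponentialPDFReal_nonneg hr x), smul_eq_mul]
  by_cases hx : 0 ≤ x
  · rw [indicator_of_mem (mem_Ici.2 hx), exponentialPDFReal, gammaPDFReal, if_pos hx]
    simp only [rpow_one, Gamma_one, div_one, sub_self, rpow_zero, mul_one]
    rw [mul_assoc, ← exp_add]
    ring_nf
  · rw [indicator_of_notMem (by simpa using hx), exponentialPDFReal, gammaPDFReal, if_neg hx,
      zero_mul]

lemma expMeasure_eq_withDensity (r : ℝ) :
    expMeasure r = volume.withDensity (exponentialPDF r) := rfl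

lemma measurable_exponentialPDF (r : ℝ) : Measurable (exponentialPDF r) :=
  (measurable_exponentialPDFReal r).ennreal_ofReal

lemma integrable_exp_mul_expMeasure {r θ : ℝ} (hr : 0 < r) (hθ : θ < r) :
    Integrable (fun x => exp (θ * x)) (expMeasure r) := by
  rw [expMeasure_eq_withDensity, integrable_withDensity_iff_integrable_smul'
    (measurable_exponentialPDF r) (.of_forall fun _ => ENNReal.ofReal_lt_top)]
  simp_rw [exponentialPDF_toReal_smul_exp_mul hr]
  refine IntegrableOn.integrable_indicator ?_ measurableSet_Ici
  exact (integrableOn_Ici_iff_integrableOn_Ioi).2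
    ((integrableOn_exp_mul_Ioi (sub_neg.2 hθ) 0).const_mul r)

lemma mgf_id_expMeasure {r θ : ℝ} (hr : 0 < r) (hθ : θ < r) :
    mgf id (expMeasure r) θ = r / (r - θ) := by
  rw [mgf, expMeasure_eq_withDensity, integral_withDensity_eq_integral_toReal_smul
    (measurable_exponentialPDF r) (.of_forall fun _ => ENNReal.ofReal_lt_top)]
  simp_rw [id, exponentialPDF_toReal_smul_exp_mul hr]
  rw [integral_indicator measurableSet_Ici, integral_Ici_eq_integral_Ioi, integral_const_mul,
    integral_exp_mul_Ioi (sub_neg.2 hθ), mul_zero, exp_zero, ← neg_sub, div_neg, neg_div, neg_neg,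
    mul_one_div]

lemma mgf_eq_of_map_eq_expMeasure {Y : Ω → ℝ} {r θ : ℝ} (hr : 0 < r) (hθ : θ < r)
    (hY : Measurable Y) (hdist : P.map Y = expMeasure r) :
    mgf Y P θ = r / (r - θ) := by
  rw [← mgf_id_map hY.aemeasurable, hdist, mgf_id_expMeasure hr hθ]

lemma integrable_exp_mul_of_map_eq_expMeasure {Y : Ω → ℝ} {r θ : ℝ} (hr : 0 < r) (hθ : θ < r)
    (hY : Measurable Y) (hdist : P.map Y = expMeasure r) :
    Integrable (fun ω => exp (θ * Y ω)) P := by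
  have h := integrable_exp_mul_expMeasure hr hθ
  rw [← hdist] at h
  exact (integrable_map_measure (by fun_prop) hY.aemeasurable).1 h

/-- Chernoff's bound at the optimal parameter `θ = r - b⁻¹`, where each summand has mgf `r b`. -/
theorem iIndepFun.measureReal_sum_ge_le_of_expMeasure {Y : ι → Ω → ℝ} {r b : ℝ} (hr : 0 < r)
    (hb : r⁻¹ ≤ b) (hY : ∀ i, Measurable (Y i)) (hindep : iIndepFun Y P)
    (hdist : ∀ i, P.map (Y i) = expMeasure r) (s : Finset ι) :
    P.real {ω | #s * b ≤ ∑ i ∈ s, Y i ω} ≤ exp (-#s * (r * b - 1 - log (r * b))) := by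
  have := hindep.isProbabilityMeasure
  have hb0 : 0 < b := (inv_pos.2 hr).trans_le hb
  have hθ0 : 0 ≤ r - b⁻¹ := sub_nonneg.2 (inv_le_of_inv_le₀ hr hb)
  have hθr : r - b⁻¹ < r := sub_lt_self r (inv_pos.2 hb0)
  have hrb : 0 < r * b := mul_pos hr hb0
  have hmgf : mgf (∑ i ∈ s, Y i) P (r - b⁻¹) = (r * b) ^ #s := by
    rw [hindep.mgf_sum hY, Finset.prod_eq_pow_card fun i _ =>
      mgf_eq_of_map_eq_expMeasure hr hθr (hY i) (hdist i), sub_sub_cancel, div_inv_eq_mul]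
  have hchernoff := measure_ge_le_exp_mul_mgf (#s * b) hθ0 <|
    hindep.integrable_exp_mul_sum hY (s := s) fun i _ =>
      integrable_exp_mul_of_map_eq_expMeasure hr hθr (hY i) (hdist i)
  simp only [Finset.sum_apply] at hchernoff
  refine hchernoff.trans_eq ?_
  rw [hmgf, ← exp_log (pow_pos hrb _), log_pow, ← exp_add]
  congr 1
  field_simp
  ring

theorem iIndepFun.measure_sum_range_ge_le_exp {Y : ℕ → Ω → ℝ} {r m a : ℝ} (hr : 0 < r)
    (hrm : r⁻¹ < m) (ha : 0 < a) (hY : ∀ n, Measurable (Y n)) (hindep : iIndepFun Y P)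
    (hdist : ∀ n, P.map (Y n) = expMeasure r) {s : ℕ}
    (hs : ⌈4 * a / (1 - r⁻¹ / m) ^ 2⌉₊ ≤ s) :
    P {ω | s * (m * (1 - √(a / s))) ≤ ∑ n ∈ Finset.range s, Y n ω} ≤
      ENNReal.ofReal (exp (-(a / 2))) := by
  have := hindep.isProbabilityMeasure
  have hm : 0 < m := (inv_pos.2 hr).trans hrm
  set ρ := r⁻¹ / m with hρ
  set δ := √(a / s) with hδ
  have hρ0 : 0 < ρ := div_pos (inv_pos.2 hr) hm
  have hρ1 : ρ < 1 := (div_lt_one hm).2 hrm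
  have hs0 : 0 < s :=
    (Nat.ceil_pos.2 (div_pos (by positivity) (pow_pos (by linarith) 2))).trans_le hs
  have hδρ : δ ≤ (1 - ρ) / 2 := sqrt_div_le_half_of_ceil_le (by linarith) hs
  have hsδ : s * δ ^ 2 = a := by
    rw [hδ, sq_sqrt (by positivity), mul_div_cancel₀ _ (by positivity)]
  have hb : r⁻¹ ≤ m * (1 - δ) := by
    have : r⁻¹ = m * ρ := by rw [hρ, mul_div_cancel₀ _ hm.ne']
    rw [this]
    gcongr
    linarith
  have hx : r * (m * (1 - δ)) = (1 - δ) / ρ := by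
    rw [hρ]
    field_simp
  have hrate := sq_div_two_le_sub_one_sub_log_div hρ0 (sqrt_nonneg _) hδρ
  have hchernoff := hindep.measureReal_sum_ge_le_of_expMeasure hr hb hY hdist (Finset.range s)
  rw [Finset.card_range, hx] at hchernoff
  rw [← ofReal_measureReal]
  refine ENNReal.ofReal_le_ofReal (hchernoff.trans (exp_le_exp.2 ?_))
  have := mul_le_mul_of_nonneg_left hrate (Nat.cast_nonneg s)
  linarith

end ProbabilityTheory

section Bandit

variable {Ω : Type*} {K : ℕ}

def typeOneAnomaly (α : ℝ) (X : Fin K → ℕ → Ω → ℝ) (I : ℕ → Ω → Fin K) (k : Fin K)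
    (u t : ℕ) (μstar : ℝ) : Set Ω :=
  {ω | u ≤ pullCount I k t ω ∧ (μstar : EReal) ≤ mucbIndex α X I k t ω}

lemma pullCount_le (I : ℕ → Ω → Fin K) (k : Fin K) (t : ℕ) (ω : Ω) : pullCount I k t ω ≤ t :=
  (Finset.card_filter_le _ _).trans (Finset.card_range t).le

lemma pullCount_mul_le_sum_of_le_mucbIndex {α c : ℝ} {X : Fin K → ℕ → Ω → ℝ}
    {I : ℕ → Ω → Fin K} {k : Fin K} {t : ℕ} {ω : Ω}
    (hT : α * log t < pullCount I k t ω) (hc : (c : EReal) ≤ mucbIndex α X I k t ω) :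
    pullCount I k t ω * (c * (1 - √(α * log t / pullCount I k t ω))) ≤
      ∑ n ∈ Finset.range (pullCount I k t ω), X k n ω := by
  set T := pullCount I k t ω with hT_def
  rcases T.eq_zero_or_pos with hT0 | hT0
  · simp [hT0]
  have hT0' : (0 : ℝ) < T := by exact_mod_cast hT0
  have hδ : 0 < 1 - √(α * log t / T) :=
    sub_pos.2 ((sqrt_lt' one_pos).2 (by simpa using (div_lt_one hT0').2 hT))
  rw [mucbIndex, ← hT_def, if_neg (by push Not; exact ⟨hT0.ne', hT⟩), EReal.coe_le_coe_iff,
    sampleMean, ← hT_def, ← div_eq_mul_inv, le_div_iff₀ hδ, le_div_iff₀ hT0'] at hc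
  linarith

lemma typeOneAnomaly_subset_biUnion {α μstar : ℝ} {X : Fin K → ℕ → Ω → ℝ}
    {I : ℕ → Ω → Fin K} {k : Fin K} {u t : ℕ} (hu : α * log t < u) :
    typeOneAnomaly α X I k u t μstar ⊆ ⋃ s ∈ Finset.Icc u t,
      {ω | s * (μstar * (1 - √(α * log t / s))) ≤ ∑ n ∈ Finset.range s, X k n ω} := by
  rintro ω ⟨hu_le, hindex⟩
  refine mem_biUnion (Finset.mem_Icc.2 ⟨hu_le, pullCount_le I k t ω⟩) ?_
  exact pullCount_mul_le_sum_of_le_mucbIndex (hu.trans_le (by exact_mod_cast hu_le)) hindex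

end Bandit

theorem mucb_type_one_anomaly_bound_general {Ω : Type*} [MeasurableSpace Ω] (P : Measure Ω)
    [IsProbabilityMeasure P] (K : ℕ)
    (lam : Fin K → ℝ) (hlam : ∀ k, 0 < lam k)
    (X : Fin K → ℕ → Ω → ℝ) (hXmeas : ∀ k n, Measurable (X k n))
    (hindep : iIndepFun (fun p : Fin K × ℕ => X p.1 p.2) P)
    (hdist : ∀ k n, Measure.map (X k n) P = expMeasure (lam k))
    (I : ℕ → Ω → Fin K)
    (kstar : Fin K) (hkstar : ∀ k, k ≠ kstar → (lam k)⁻¹ < (lam kstar)⁻¹)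
    (α : ℝ)
    (k : Fin K) (hk : k ≠ kstar) (t : ℕ) (ht : 2 ≤ t) :
    P {ω | ⌈4 * α * Real.log t / (1 - (lam k)⁻¹ / (lam kstar)⁻¹) ^ 2⌉₊ ≤ pullCount I k t ω ∧
        (((lam kstar)⁻¹ : ℝ) : EReal) ≤ mucbIndex α X I k t ω} ≤
      ENNReal.ofReal ((t : ℝ) ^ (-(α / 2) + 1)) := by
  have ht1 : (1 : ℝ) < t := by exact_mod_cast ht
  rcases le_or_gt α 2 with hα2 | hα2
  · exact prob_le_one.trans (ENNReal.one_le_ofReal.2 (one_le_rpow ht1.le (by linarith)))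
  have ha : 0 < α * log t := mul_pos (by linarith) (log_pos ht1)
  rw [mul_assoc 4 α]
  set u := ⌈4 * (α * log t) / (1 - (lam k)⁻¹ / (lam kstar)⁻¹) ^ 2⌉₊
  have hu : α * log t < u := lt_ceil_four_mul_div_sq ha
    (div_pos (inv_pos.2 (hlam k)) (inv_pos.2 (hlam kstar))).le
    ((div_lt_one (inv_pos.2 (hlam kstar))).2 (hkstar k hk))
  have htail (s : ℕ) (hs : s ∈ Finset.Icc u t) :
      P {ω | s * ((lam kstar)⁻¹ * (1 - √(α * log t / s))) ≤ ∑ n ∈ Finset.range s, X k n ω} ≤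
        ENNReal.ofReal ((t : ℝ) ^ (-(α / 2))) := by
    rw [rpow_def_of_pos (by positivity), mul_neg, mul_comm (log _), div_mul_eq_mul_div]
    exact (hindep.precomp (Prod.mk_right_injective k)).measure_sum_range_ge_le_exp (hlam k)
      (hkstar k hk) ha (hXmeas k) (hdist k) (Finset.mem_Icc.1 hs).1
  calc P (typeOneAnomaly α X I k u t (lam kstar)⁻¹)
      ≤ ∑ s ∈ Finset.Icc u t, P {ω | s * ((lam kstar)⁻¹ * (1 - √(α * log t / s))) ≤
          ∑ n ∈ Finset.range s, X k n ω} :=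
        (measure_mono (typeOneAnomaly_subset_biUnion hu)).trans (measure_biUnion_finset_le _ _)
    _ ≤ t • ENNReal.ofReal ((t : ℝ) ^ (-(α / 2))) := by
        refine (Finset.sum_le_card_nsmul _ _ _ htail).trans (nsmul_le_nsmul_left zero_le ?_)
        have : 0 < u := by exact_mod_cast ha.trans hu
        rw [Nat.card_Icc]
        omega
    _ = ENNReal.ofReal ((t : ℝ) ^ (-(α / 2) + 1)) := by
        rw [nsmul_eq_mul, ← ENNReal.ofReal_natCast, ← ENNReal.ofReal_mul (by positivity),
          rpow_add_one (by positivity), mul_comm]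

/-- **Upper bound on the probability of type-1 anomalies for MUCB (Lemma 2).**
Run MUCB(α) on `K ≥ 2` arms with i.i.d. exponential rewards (means `μ_k = 1/λ_k`, unique
optimal arm `k*`, `μ* = 1/λ_{k*}`, `ρ_k = μ_k/μ*`).  For a suboptimal arm `k ≠ k*` set
`u_k(t) = ⌈4 α ln t / (1 − ρ_k)²⌉`.  Then for every `t ≥ 2`, the type-1 anomaly
`{φ₁(u_k(t))}_{k,t} = {T_{k,t} ≥ u_k(t) and B_{k,t} ≥ μ*}` satisfies
`P({φ₁(u_k(t))}_{k,t}) ≤ t^{−α/2+1}`. -/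
theorem mucb_type_one_anomaly_bound {Ω : Type*} [MeasurableSpace Ω] (P : Measure Ω)
    [IsProbabilityMeasure P] (K : ℕ) (hK : 2 ≤ K)
    (lam : Fin K → ℝ) (hlam : ∀ k, 0 < lam k)
    (X : Fin K → ℕ → Ω → ℝ) (hXmeas : ∀ k n, Measurable (X k n))
    (hindep : iIndepFun (fun p : Fin K × ℕ => X p.1 p.2) P)
    (hdist : ∀ k n, Measure.map (X k n) P = expMeasure (lam k))
    (I : ℕ → Ω → Fin K) (hImeas : ∀ t, Measurable (I t))
    (hdet : IsDeterministicPolicy X I)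
    (kstar : Fin K) (hkstar : ∀ k, k ≠ kstar → (lam k)⁻¹ < (lam kstar)⁻¹)
    (α : ℝ) (hα : 0 ≤ α) (hmucb : IsMUCBPolicy α X I)
    (k : Fin K) (hk : k ≠ kstar) (t : ℕ) (ht : 2 ≤ t) :
    P {ω | ⌈4 * α * Real.log t / (1 - (lam k)⁻¹ / (lam kstar)⁻¹) ^ 2⌉₊ ≤ pullCount I k t ω ∧
        (((lam kstar)⁻¹ : ℝ) : EReal) ≤ mucbIndex α X I k t ω} ≤
      ENNReal.ofReal ((t : ℝ) ^ (-(α / 2) + 1)) :=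
  mucb_type_one_anomaly_bound_general P K lam hlam X hXmeas hindep hdist I kstar hkstar α k hk t ht
end

section
/- (Rate-function bound for the optimal arm.) Let α > 0, t > 1 and let u be a real number with u > α ln(t). Set s = √( α ln(t)/u ) ∈ (0, 1) and b = 1 − s. Then b − 1 − ln(b) ≥ 3 s² / ( 2(1 + 2b) ) ≥ α ln(t) / (2u). -/
/-!
With `g x = x - 1 - log x - 3 (1 - x)² / (2 (1 + 2x))` one computes
`g' x = (x - 1)³ / (x (1 + 2x)²)`, so `g` decreases on `(0, 1]`, increases on `[1, ∞)` and vanishes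
at `1`; hence `g ≥ 0` on `(0, ∞)`, which at `x = b = 1 - s` is the first inequality. The second is
`α ln t / (2u) = s² / 2` together with `1 + 2b ≤ 3`.
-/

open Real Set

noncomputable def rateGap (x : ℝ) : ℝ :=
  x - 1 - log x - 3 * (1 - x) ^ 2 / (2 * (1 + 2 * x))

lemma hasDerivAt_rateGap {x : ℝ} (hx : 0 < x) :
    HasDerivAt rateGap ((x - 1) ^ 3 / (x * (1 + 2 * x) ^ 2)) x := by
  have hden : 2 * (1 + 2 * x) ≠ 0 := by positivity
  have h := ((((hasDerivAt_id' x).sub_const 1).fun_sub (hasDerivAt_log hx.ne')).fun_sub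
    ((((hasDerivAt_id' x).const_sub 1).fun_pow 2).const_mul 3 |>.fun_div
      (((hasDerivAt_id' x).const_mul 2).const_add 1 |>.const_mul 2) hden))
  refine (h : HasDerivAt rateGap _ x).congr_deriv ?_
  field_simp
  ring

lemma continuousOn_rateGap : ContinuousOn rateGap (Ioi 0) := fun _ hx =>
  (hasDerivAt_rateGap hx).continuousAt.continuousWithinAt

lemma rateGap_one : rateGap 1 = 0 := by
  simp [rateGap]

lemma antitoneOn_rateGap : AntitoneOn rateGap (Ioc 0 1) := by
  refine antitoneOn_of_hasDerivWithinAt_nonpos (f' := fun x => (x - 1) ^ 3 / (x * (1 + 2 * x) ^ 2))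
    (convex_Ioc 0 1)
    (continuousOn_rateGap.mono Ioc_subset_Ioi_self)
    (fun x hx => ?_) (fun x hx => ?_) <;> rw [interior_Ioc] at hx
  · exact (hasDerivAt_rateGap hx.1).hasDerivWithinAt
  · have : (x - 1) ^ 3 ≤ 0 := Odd.pow_nonpos (by decide) (sub_nonpos.mpr hx.2.le)
    exact div_nonpos_of_nonpos_of_nonneg this (by positivity [hx.1])

lemma monotoneOn_rateGap : MonotoneOn rateGap (Ici 1) := by
  refine monotoneOn_of_hasDerivWithinAt_nonneg (f' := fun x => (x - 1) ^ 3 / (x * (1 + 2 * x) ^ 2))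
    (convex_Ici 1)
    (continuousOn_rateGap.mono fun x (hx : 1 ≤ x) => zero_lt_one.trans_le hx)
    (fun x hx => ?_) (fun x hx => ?_) <;> rw [interior_Ici] at hx
  · exact (hasDerivAt_rateGap (zero_lt_one.trans hx)).hasDerivWithinAt
  · have hx0 : 0 < x := zero_lt_one.trans hx
    have : 0 ≤ (x - 1) ^ 3 := pow_nonneg (sub_nonneg.mpr (le_of_lt hx)) 3
    positivity

lemma rateGap_nonneg {x : ℝ} (hx : 0 < x) : 0 ≤ rateGap x := by
  rw [← rateGap_one]
  rcases le_total x 1 with h | h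
  · exact antitoneOn_rateGap ⟨hx, h⟩ ⟨zero_lt_one, le_rfl⟩ h
  · exact monotoneOn_rateGap self_mem_Ici h h

theorem three_mul_sq_div_le_sub_one_sub_log {x : ℝ} (hx : 0 < x) :
    3 * (1 - x) ^ 2 / (2 * (1 + 2 * x)) ≤ x - 1 - log x := by
  have := rateGap_nonneg hx
  rw [rateGap] at this
  linarith

/-- **Rate-function bound for the optimal arm.**
For `α > 0`, `t > 1` and `u > α ln t`, setting `s = √(α ln t / u) ∈ (0,1)` and `b = 1 − s`,
we have `b − 1 − ln b ≥ 3 s² / (2 (1 + 2 b)) ≥ α ln t / (2u)`. -/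
theorem rate_bound_optimal (α t u : ℝ) (hα : 0 < α) (ht : 1 < t)
    (hu : α * Real.log t < u) :
    Real.sqrt (α * Real.log t / u) ∈ Set.Ioo (0 : ℝ) 1 ∧
    3 * Real.sqrt (α * Real.log t / u) ^ 2 /
        (2 * (1 + 2 * (1 - Real.sqrt (α * Real.log t / u)))) ≤
      (1 - Real.sqrt (α * Real.log t / u)) - 1 -
        Real.log (1 - Real.sqrt (α * Real.log t / u)) ∧
    α * Real.log t / (2 * u) ≤
      3 * Real.sqrt (α * Real.log t / u) ^ 2 /
        (2 * (1 + 2 * (1 - Real.sqrt (α * Real.log t / u)))) := by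
  have hL : 0 < α * log t := mul_pos hα (log_pos ht)
  have hu0 : 0 < u := hL.trans hu
  set r := α * log t / u with hr
  have hr0 : 0 < r := div_pos hL hu0
  have hr1 : r < 1 := (div_lt_one hu0).mpr hu
  set s := √r
  have hs0 : 0 < s := sqrt_pos.mpr hr0
  have hs1 : s < 1 := (sqrt_lt' one_pos).mpr (by simpa using hr1)
  have hsq : s ^ 2 = r := sq_sqrt hr0.le
  refine ⟨⟨hs0, hs1⟩, ?_, ?_⟩
  · simpa using three_mul_sq_div_le_sub_one_sub_log (x := 1 - s) (by linarith)
  · calc α * log t / (2 * u) = 3 * s ^ 2 / (2 * 3) := by rw [hsq, hr]; field_simp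
      _ ≤ 3 * s ^ 2 / (2 * (1 + 2 * (1 - s))) := by gcongr; linarith
end
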